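/- arXiv:math/9807141 — 7 statements merged into one kernel-verified Lean document; each statement's English description precedes it below -/
import Mathlib

section
/- Assume (G,H,π,B,b₀,l₀) is an admissible set. Then for every g ∈ G and every v ∈ B, W(π(g)v) = λ(g)(Wv); that is, the reduced wavelet transform W intertwines the representation π on B with the representation λ on functions on X. -/
open MeasureTheory ComplexConjugate

theorem stmt1
    {G : Type} [Group G]
    {B : Type} [NormedAddCommGroup B] [NormedSpace ℂ B] [CompleteSpace B]
    {X : Type} [MeasurableSpace X] (μ : Measure X)
    (H : Subgroup G) (hHnormal : H.Normal)
    (s : X → G) (xPart : G → X) (hPart : G → H)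
    (hdecomp : ∀ g : G, s (xPart g) * ((hPart g : G)) = g)
    (hsec : ∀ x : X, xPart (s x) = x)
    (π : G →* (B →L[ℂ] B))
    (hπiso : ∀ (g : G) (b : B), ‖π g b‖ = ‖b‖)
    (χ : H → ℂ) (hχ : ∀ h₁ h₂ : H, χ (h₁ * h₂) = χ h₁ * χ h₂)
    (b₀ : B) (l₀ : B →L[ℂ] ℂ)
    (hvac : ∀ h : H, π (h : G) b₀ = χ h • b₀)
    (hl : ∀ h : H, l₀.comp (π (h : G)) = (conj (χ h)) • l₀)
    (hnb : ‖b₀‖ = 1) (hnl : ‖l₀‖ = 1) (hpair : l₀ b₀ ≠ 0)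
    (hadmi : Integrable (fun x => l₀ (π ((s x)⁻¹) b₀) * l₀ (π (s x) b₀)) μ)
    (hadm : ∫ x, l₀ (π ((s x)⁻¹) b₀) * l₀ (π (s x) b₀) ∂μ = l₀ b₀)
    :
    ∀ (g : G) (v : B) (x : X),
      l₀ (π ((s x)⁻¹) (π g v)) =
        χ (hPart (g⁻¹ * s x)) * l₀ (π ((s (xPart (g⁻¹ * s x)))⁻¹) v) := by
  intro g v x
  set h : H := hPart (g⁻¹ * s x) with hh
  set x' : X := xPart (g⁻¹ * s x) with hx'
  have hd : s x' * (h : G) = g⁻¹ * s x := hdecomp _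
  -- |χ h| = 1, hence χ h * conj (χ h) = 1
  have habs : ∀ k : H, ‖χ k‖ = 1 := by
    intro k
    have h1 : ‖π (k : G) b₀‖ = 1 := by rw [hπiso]; exact hnb
    rw [hvac, norm_smul, hnb, mul_one] at h1
    exact h1
  have hχone : χ 1 = 1 := by
    have := hχ 1 1
    rw [mul_one] at this
    have hne : χ 1 ≠ 0 := by
      intro hz
      have := habs 1
      rw [hz, norm_zero] at this
      norm_num at this
    field_simp at this
    tauto
  have hinv : ∀ k : H, χ k⁻¹ * χ k = 1 := by
    intro k
    rw [← hχ, inv_mul_cancel, hχone]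
  have hconj : conj (χ h⁻¹) = χ h := by
    have h2 : χ h⁻¹ * conj (χ h⁻¹) = 1 := by
      rw [Complex.mul_conj']
      rw [habs h⁻¹]
      norm_num
    have hne : χ h⁻¹ ≠ 0 := by
      intro hz
      rw [hz, zero_mul] at h2
      exact one_ne_zero h2.symm
    exact mul_left_cancel₀ hne (h2.trans (hinv h).symm)
  -- group computation
  have key : (s x)⁻¹ * g = ((h : G))⁻¹ * (s x')⁻¹ := by
    have : ((s x' * (h : G)))⁻¹ = (g⁻¹ * s x)⁻¹ := by rw [hd]
    simpa [mul_inv_rev] using this.symm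
  have hπ : π ((s x)⁻¹) (π g v) = π (((h⁻¹ : H) : G)) (π ((s x')⁻¹) v) := by
    have : π ((s x)⁻¹ * g) v = π (((h : G))⁻¹ * (s x')⁻¹) v := by rw [key]
    simpa [map_mul] using this
  rw [hπ]
  have := congrFun (congrArg DFunLike.coe (hl h⁻¹)) (π ((s x')⁻¹) v)
  simp only [ContinuousLinearMap.comp_apply, ContinuousLinearMap.smul_apply,
    smul_eq_mul] at this
  rw [this, hconj]
end

section
/- Assume (G,H,π,B,b₀,l₀) is an admissible set. Then the image F(X) = W(B) of the reduced wavelet transform is invariant under the representation λ: for every g ∈ G, λ(g)(F(X)) ⊆ F(X). -/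
open MeasureTheory ComplexConjugate

theorem stmt2
    {G : Type} [Group G]
    {B : Type} [NormedAddCommGroup B] [NormedSpace ℂ B] [CompleteSpace B]
    {X : Type} [MeasurableSpace X] (μ : Measure X)
    (H : Subgroup G) (hHnormal : H.Normal)
    (s : X → G) (xPart : G → X) (hPart : G → H)
    (hdecomp : ∀ g : G, s (xPart g) * ((hPart g : G)) = g)
    (hsec : ∀ x : X, xPart (s x) = x)
    (π : G →* (B →L[ℂ] B))
    (hπiso : ∀ (g : G) (b : B), ‖π g b‖ = ‖b‖)
    (χ : H → ℂ) (hχ : ∀ h₁ h₂ : H, χ (h₁ * h₂) = χ h₁ * χ h₂)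
    (b₀ : B) (l₀ : B →L[ℂ] ℂ)
    (hvac : ∀ h : H, π (h : G) b₀ = χ h • b₀)
    (hl : ∀ h : H, l₀.comp (π (h : G)) = (conj (χ h)) • l₀)
    (hnb : ‖b₀‖ = 1) (hnl : ‖l₀‖ = 1) (hpair : l₀ b₀ ≠ 0)
    (hadmi : Integrable (fun x => l₀ (π ((s x)⁻¹) b₀) * l₀ (π (s x) b₀)) μ)
    (hadm : ∫ x, l₀ (π ((s x)⁻¹) b₀) * l₀ (π (s x) b₀) ∂μ = l₀ b₀)
    :
    ∀ (g : G) (v : B), ∃ w : B, ∀ x : X,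
      χ (hPart (g⁻¹ * s x)) * l₀ (π ((s (xPart (g⁻¹ * s x)))⁻¹) v) =
        l₀ (π ((s x)⁻¹) w) := by
  -- |χ h| = 1
  have hnorm : ∀ h : H, ‖χ h‖ = 1 := by
    intro h
    have := hπiso (h : G) b₀
    rw [hvac h, norm_smul, hnb, mul_one] at this
    simpa using this
  have hne : ∀ h : H, χ h ≠ 0 := fun h => by
    intro h0; have := hnorm h; rw [h0] at this; simp at this
  have hχ1 : χ 1 = 1 := by
    have h11 := hχ 1 1
    rw [mul_one] at h11
    have := hne 1
    field_simp at h11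
    tauto
  have hχinv : ∀ h : H, χ h⁻¹ = (χ h)⁻¹ := by
    intro h
    have h2 := hχ h⁻¹ h
    rw [inv_mul_cancel, hχ1] at h2
    exact eq_inv_of_mul_eq_one_left h2.symm
  have hconj : ∀ h : H, conj (χ h⁻¹) = χ h := by
    intro h
    rw [hχinv h, map_inv₀]
    have hz : χ h * conj (χ h) = 1 := by
      rw [Complex.mul_conj]
      norm_cast
      rw [Complex.normSq_eq_norm_sq, hnorm h]; norm_num
    exact inv_eq_of_mul_eq_one_left hz
  intro g v
  refine ⟨π g v, fun x => ?_⟩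
  set h := hPart (g⁻¹ * s x) with hh
  set x' := xPart (g⁻¹ * s x) with hx'
  have key : (s x)⁻¹ * g = (h : G)⁻¹ * (s x')⁻¹ := by
    have hd := hdecomp (g⁻¹ * s x)
    rw [← hh, ← hx'] at hd
    have : (g⁻¹ * s x)⁻¹ = (s x' * (h : G))⁻¹ := by rw [hd]
    simpa [mul_inv_rev] using this
  have heq : l₀ (π ((s x)⁻¹ * g) v) = l₀ (π ((h : G)⁻¹ * (s x')⁻¹) v) := by
    rw [key]
  simp only [map_mul, ContinuousLinearMap.mul_apply] at heq
  rw [heq]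
  have hl' := DFunLike.congr_fun (hl h⁻¹) (π ((s x')⁻¹) v)
  simp only [ContinuousLinearMap.comp_apply, ContinuousLinearMap.smul_apply,
    smul_eq_mul, Subgroup.coe_inv] at hl'
  rw [hl', hconj h]
end

section
/- Assume (G,H,π,B,b₀,l₀) is an admissible set. Then for every g ∈ G and every function f ∈ F(X) for which the defining integral of M converges weakly, M(λ(g)f) = π(g)(Mf); that is, the inverse wavelet transform M intertwines the representation λ on F(X) with the representation π on B. -/
open MeasureTheory ComplexConjugate

def IsWeakIntegral {X B : Type*} [MeasurableSpace X] [NormedAddCommGroup B] [NormedSpace ℂ B]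
    (μ : Measure X) (F : X → B) (v : B) : Prop :=
  ∀ l : B →L[ℂ] ℂ, Integrable (fun x => l (F x)) μ ∧ l v = ∫ x, l (F x) ∂μ

theorem stmt3
    {G : Type} [Group G]
    {B : Type} [NormedAddCommGroup B] [NormedSpace ℂ B] [CompleteSpace B]
    {X : Type} [MeasurableSpace X] (μ : Measure X)
    (H : Subgroup G) (hHnormal : H.Normal)
    (s : X → G) (xPart : G → X) (hPart : G → H)
    (hdecomp : ∀ g : G, s (xPart g) * ((hPart g : G)) = g)
    (hsec : ∀ x : X, xPart (s x) = x)
    (π : G →* (B →L[ℂ] B))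
    (hπiso : ∀ (g : G) (b : B), ‖π g b‖ = ‖b‖)
    (χ : H → ℂ) (hχ : ∀ h₁ h₂ : H, χ (h₁ * h₂) = χ h₁ * χ h₂)
    (b₀ : B) (l₀ : B →L[ℂ] ℂ)
    (hvac : ∀ h : H, π (h : G) b₀ = χ h • b₀)
    (hl : ∀ h : H, l₀.comp (π (h : G)) = (conj (χ h)) • l₀)
    (hnb : ‖b₀‖ = 1) (hnl : ‖l₀‖ = 1) (hpair : l₀ b₀ ≠ 0)
    (hadmi : Integrable (fun x => l₀ (π ((s x)⁻¹) b₀) * l₀ (π (s x) b₀)) μ)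
    (hadm : ∫ x, l₀ (π ((s x)⁻¹) b₀) * l₀ (π (s x) b₀) ∂μ = l₀ b₀)
    (hinv : ∀ g : G, MeasurePreserving (fun x => xPart (g * s x)) μ μ)
    :
    ∀ (g : G) (f : X → ℂ) (v : B),
      (∃ u : B, ∀ x : X, f x = l₀ (π ((s x)⁻¹) u)) →
      IsWeakIntegral μ (fun x => f x • π (s x) b₀) v →
      IsWeakIntegral μ
        (fun x => (χ (hPart (g⁻¹ * s x)) * f (xPart (g⁻¹ * s x))) • π (s x) b₀)
        (π g v) := by
  -- χ has modulus 1
  have hχnorm : ∀ h : H, ‖χ h‖ = 1 := by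
    intro h
    have h1 := hπiso (h : G) b₀
    rw [hvac h, norm_smul, hnb] at h1
    simpa using h1
  -- χ is real-valued (self-conjugate)
  have hχconj : ∀ h : H, conj (χ h) = χ h := by
    intro h
    have h1 : l₀ (π (h : G) b₀) = conj (χ h) * l₀ b₀ := by
      have := congrArg (fun (L : B →L[ℂ] ℂ) => L b₀) (hl h)
      simpa using this
    have h2 : l₀ (π (h : G) b₀) = χ h * l₀ b₀ := by
      rw [hvac h]; simp
    exact mul_right_cancel₀ hpair (h1.symm.trans h2)
  -- hence χ h * χ h = 1
  have hχsq : ∀ h : H, χ h * χ h = 1 := by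
    intro h
    have h0 : χ h * conj (χ h) = 1 := by
      rw [Complex.mul_conj]
      norm_cast
      rw [Complex.normSq_eq_norm_sq, hχnorm h]
      norm_num
    rw [hχconj h] at h0
    exact h0
  rintro g f v ⟨u, hf⟩ hWI
  intro l
  set l' : B →L[ℂ] ℂ := l.comp (π g) with hl'def
  obtain ⟨hint, hval⟩ := hWI l'
  set T : X → X := fun x => xPart (g⁻¹ * s x) with hT
  have hMP : MeasurePreserving T μ μ := hinv g⁻¹
  have hintG : Integrable (fun y => l' (f y • π (s y) b₀)) μ := hint
  -- pointwise identity
  have key : (fun x => l ((χ (hPart (g⁻¹ * s x)) * f (xPart (g⁻¹ * s x))) • π (s x) b₀))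
      = (fun y => l' (f y • π (s y) b₀)) ∘ T := by
    funext x
    set h₀ : H := hPart (g⁻¹ * s x) with hh₀
    have hd := hdecomp (g⁻¹ * s x)
    have hTx : T x = xPart (g⁻¹ * s x) := rfl
    have hsx : s x = g * (s (T x) * (h₀ : G)) := by
      show s x = g * (s (xPart (g⁻¹ * s x)) * ((hPart (g⁻¹ * s x) : H) : G))
      rw [hd]
      group
    have hπsx : π (s x) b₀ = χ h₀ • (π g (π (s (T x)) b₀)) := by
      conv_lhs => rw [hsx]
      rw [map_mul, map_mul]
      simp only [ContinuousLinearMap.mul_apply]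
      rw [hvac h₀]
      simp
    have hfTx : f (xPart (g⁻¹ * s x)) = f (T x) := rfl
    rw [Function.comp_apply, hfTx, hπsx, _root_.map_smul, _root_.map_smul,
      _root_.map_smul]
    simp only [smul_eq_mul, hl'def, ContinuousLinearMap.comp_apply]
    linear_combination (f (T x) * l (π g (π (s (T x)) b₀))) * hχsq h₀
  constructor
  · rw [key]
    exact (hMP.integrable_comp hintG.aestronglyMeasurable).mpr hintG
  · rw [key]
    have hcv : ∫ x, ((fun y => l' (f y • π (s y) b₀)) ∘ T) x ∂μ
        = ∫ y, l' (f y • π (s y) b₀) ∂μ := by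
      conv_rhs => rw [← hMP.map_eq]
      exact (integral_map hMP.measurable.aemeasurable
        (by rw [hMP.map_eq]; exact hintG.aestronglyMeasurable)).symm
    rw [hcv]
    simpa [hl'def] using hval
end

section
/- Assume (G,H,π,B,b₀,l₀) is an admissible set. Then the image M(F(X)) ⊆ B of F(X) under the inverse wavelet transform M is invariant under the representation π: for every g ∈ G, π(g)(M(F(X))) ⊆ M(F(X)). -/
open MeasureTheory ComplexConjugate

theorem stmt4
    {G : Type} [Group G]
    {B : Type} [NormedAddCommGroup B] [NormedSpace ℂ B] [CompleteSpace B]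
    {X : Type} [MeasurableSpace X] (μ : Measure X)
    (H : Subgroup G) (hHnormal : H.Normal)
    (s : X → G) (xPart : G → X) (hPart : G → H)
    (hdecomp : ∀ g : G, s (xPart g) * ((hPart g : G)) = g)
    (hsec : ∀ x : X, xPart (s x) = x)
    (π : G →* (B →L[ℂ] B))
    (hπiso : ∀ (g : G) (b : B), ‖π g b‖ = ‖b‖)
    (χ : H → ℂ) (hχ : ∀ h₁ h₂ : H, χ (h₁ * h₂) = χ h₁ * χ h₂)
    (b₀ : B) (l₀ : B →L[ℂ] ℂ)
    (hvac : ∀ h : H, π (h : G) b₀ = χ h • b₀)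
    (hl : ∀ h : H, l₀.comp (π (h : G)) = (conj (χ h)) • l₀)
    (hnb : ‖b₀‖ = 1) (hnl : ‖l₀‖ = 1) (hpair : l₀ b₀ ≠ 0)
    (hadmi : Integrable (fun x => l₀ (π ((s x)⁻¹) b₀) * l₀ (π (s x) b₀)) μ)
    (hadm : ∫ x, l₀ (π ((s x)⁻¹) b₀) * l₀ (π (s x) b₀) ∂μ = l₀ b₀)
    (hinv : ∀ g : G, MeasurePreserving (fun x => xPart (g * s x)) μ μ)
    :
    ∀ (g : G) (v : B),
      (∃ f : X → ℂ, (∃ u : B, ∀ x : X, f x = l₀ (π ((s x)⁻¹) u)) ∧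
        IsWeakIntegral μ (fun x => f x • π (s x) b₀) v) →
      ∃ f' : X → ℂ, (∃ u' : B, ∀ x : X, f' x = l₀ (π ((s x)⁻¹) u')) ∧
        IsWeakIntegral μ (fun x => f' x • π (s x) b₀) (π g v) := by
  intro g v hv
  obtain ⟨f, ⟨u, hu⟩, hwf⟩ := hv
  -- preliminary facts about χ
  have hlapp : ∀ (h : H) (w : B), l₀ (π (h : G) w) = conj (χ h) * l₀ w := by
    intro h w
    have := congrFun (congrArg (fun (m : B →L[ℂ] ℂ) => (m : B → ℂ)) (hl h)) w
    simpa using this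
  have hχ1 : χ 1 = 1 := by
    have h1 : l₀ b₀ = χ 1 * l₀ b₀ := by
      have := congrArg l₀ (hvac 1)
      simpa using this
    have h2 : (1 : ℂ) * l₀ b₀ = χ 1 * l₀ b₀ := by rw [one_mul]; exact h1
    exact (mul_right_cancel₀ hpair h2).symm
  have hreal : ∀ h : H, conj (χ h) = χ h := by
    intro h
    have h1 : l₀ (π (h : G) b₀) = χ h * l₀ b₀ := by
      rw [hvac h, l₀.map_smul, smul_eq_mul]
    have h2 : χ h * l₀ b₀ = conj (χ h) * l₀ b₀ := by rw [← h1]; exact hlapp h b₀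
    exact (mul_right_cancel₀ hpair h2).symm
  have hχinv : ∀ h : H, χ h * χ h⁻¹ = 1 := by
    intro h
    rw [← hχ h h⁻¹, mul_inv_cancel, hχ1]
  -- the new function
  refine ⟨fun x => l₀ (π ((s x)⁻¹) (π g u)), ⟨π g u, fun x => rfl⟩, ?_⟩
  intro l
  obtain ⟨hint, hval⟩ := hwf (l.comp (π g))
  set T : X → X := fun y => xPart (g⁻¹ * s y) with hT
  have hTmp : MeasurePreserving T μ μ := hinv g⁻¹
  -- the key pointwise identity
  have key : ∀ y : X,
      (l.comp (π g)) (f (T y) • π (s (T y)) b₀)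
        = l ((l₀ (π ((s y)⁻¹) (π g u))) • π (s y) b₀) := by
    intro y
    set k : H := hPart (g⁻¹ * s y) with hk
    have hdec : s (T y) * (k : G) = g⁻¹ * s y := hdecomp (g⁻¹ * s y)
    have hsT : s (T y) = g⁻¹ * s y * (k : G)⁻¹ := eq_mul_inv_of_mul_eq hdec
    -- compute f (T y)
    have hf1 : f (T y) = χ k * l₀ (π ((s y)⁻¹) (π g u)) := by
      have hinvEq : (s (T y))⁻¹ = (k : G) * ((s y)⁻¹ * g) := by
        rw [hsT]; group
      rw [hu (T y), hinvEq, map_mul, ContinuousLinearMap.mul_apply, hlapp, hreal,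
        map_mul, ContinuousLinearMap.mul_apply]
    -- compute the second factor
    have hb1 : l (π g (π (s (T y)) b₀)) = χ k⁻¹ * l (π (s y) b₀) := by
      have hgs : g * s (T y) = s y * ((k⁻¹ : H) : G) := by
        rw [hsT]; simp only [InvMemClass.coe_inv]; group
      have hpb : π g (π (s (T y)) b₀) = π (s y) (π ((k⁻¹ : H) : G) b₀) := by
        rw [← ContinuousLinearMap.mul_apply, ← map_mul, hgs, map_mul,
          ContinuousLinearMap.mul_apply]
      rw [hpb, hvac k⁻¹, (π (s y)).map_smul, l.map_smul, smul_eq_mul]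
    show l (π g (f (T y) • π (s (T y)) b₀)) = l ((l₀ (π ((s y)⁻¹) (π g u))) • π (s y) b₀)
    rw [(π g).map_smul, l.map_smul, l.map_smul, smul_eq_mul, smul_eq_mul, hb1, hf1]
    linear_combination (l₀ (π ((s y)⁻¹) (π g u)) * l (π (s y) b₀)) * hχinv k
  have hcomp : (fun y => (l.comp (π g)) (f (T y) • π (s (T y)) b₀))
      = fun y => l ((l₀ (π ((s y)⁻¹) (π g u))) • π (s y) b₀) := funext key
  constructor
  · have hGl' : Integrable (fun y => (l.comp (π g)) (f (T y) • π (s (T y)) b₀)) μ :=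
      (hTmp.integrable_comp hint.aestronglyMeasurable).mpr hint
    have := hcomp ▸ hGl'
    exact this
  · have hmap : μ.map T = μ := hTmp.map_eq
    have hasm : AEStronglyMeasurable (fun x => (l.comp (π g)) (f x • π (s x) b₀))
        (μ.map T) := by rw [hmap]; exact hint.aestronglyMeasurable
    have h2 := integral_map hTmp.measurable.aemeasurable hasm
    rw [hmap] at h2
    calc l (π g v) = (l.comp (π g)) v := rfl
      _ = ∫ x, (l.comp (π g)) (f x • π (s x) b₀) ∂μ := hval
      _ = ∫ x, (l.comp (π g)) (f (T x) • π (s (T x)) b₀) ∂μ := h2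
      _ = ∫ x, l ((l₀ (π ((s x)⁻¹) (π g u))) • π (s x) b₀) ∂μ := by rw [hcomp]
end

section
/- Let (G,H,π',B',b₀',l₀') and (G,H,π'',B'',b₀'',l₀'') be two admissible sets for the same group G, normal subgroup H, homogeneous space X = G/H with invariant measure μ, section s, and the same character χ of H, and suppose F'(X) ⊆ F''(X), where F'(X) and F''(X) are the images of the corresponding reduced wavelet transforms. Then the operator T : B' → B'' defined by Tb = ∫_X ⟨π'(s(x)⁻¹)b, l₀'⟩ · π''(s(x)) b₀'' dμ(x) (weakly convergent integral, equal to the composition M''∘W' of the wavelet transform for π' with the inverse wavelet transform for π'') intertwines π' and π'': T∘π'(g) = π''(g)∘T for all g ∈ G. -/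
open MeasureTheory ComplexConjugate

theorem stmt10
    {G : Type} [Group G]
    {B₁ : Type} [NormedAddCommGroup B₁] [NormedSpace ℂ B₁] [CompleteSpace B₁]
    {B₂ : Type} [NormedAddCommGroup B₂] [NormedSpace ℂ B₂] [CompleteSpace B₂]
    {X : Type} [MeasurableSpace X] (μ : Measure X)
    (H : Subgroup G) (hHnormal : H.Normal)
    (s : X → G) (xPart : G → X) (hPart : G → H)
    (hdecomp : ∀ g : G, s (xPart g) * ((hPart g : G)) = g)
    (hsec : ∀ x : X, xPart (s x) = x)
    (hinv : ∀ g : G, MeasurePreserving (fun x => xPart (g * s x)) μ μ)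
    (π₁ : G →* (B₁ →L[ℂ] B₁)) (hπ₁iso : ∀ (g : G) (b : B₁), ‖π₁ g b‖ = ‖b‖)
    (π₂ : G →* (B₂ →L[ℂ] B₂)) (hπ₂iso : ∀ (g : G) (b : B₂), ‖π₂ g b‖ = ‖b‖)
    (χ : H → ℂ) (hχ : ∀ h₁ h₂ : H, χ (h₁ * h₂) = χ h₁ * χ h₂)
    (b₁ : B₁) (l₁ : B₁ →L[ℂ] ℂ)
    (hvac₁ : ∀ h : H, π₁ (h : G) b₁ = χ h • b₁)
    (hl₁ : ∀ h : H, l₁.comp (π₁ (h : G)) = (conj (χ h)) • l₁)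
    (hnb₁ : ‖b₁‖ = 1) (hnl₁ : ‖l₁‖ = 1) (hpair₁ : l₁ b₁ ≠ 0)
    (hadmi₁ : Integrable (fun x => l₁ (π₁ ((s x)⁻¹) b₁) * l₁ (π₁ (s x) b₁)) μ)
    (hadm₁ : ∫ x, l₁ (π₁ ((s x)⁻¹) b₁) * l₁ (π₁ (s x) b₁) ∂μ = l₁ b₁)
    (b₂ : B₂) (l₂ : B₂ →L[ℂ] ℂ)
    (hvac₂ : ∀ h : H, π₂ (h : G) b₂ = χ h • b₂)
    (hl₂ : ∀ h : H, l₂.comp (π₂ (h : G)) = (conj (χ h)) • l₂)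
    (hnb₂ : ‖b₂‖ = 1) (hnl₂ : ‖l₂‖ = 1) (hpair₂ : l₂ b₂ ≠ 0)
    (hadmi₂ : Integrable (fun x => l₂ (π₂ ((s x)⁻¹) b₂) * l₂ (π₂ (s x) b₂)) μ)
    (hadm₂ : ∫ x, l₂ (π₂ ((s x)⁻¹) b₂) * l₂ (π₂ (s x) b₂) ∂μ = l₂ b₂)
    (hFsub : ∀ v : B₁, ∃ w : B₂, ∀ x : X,
      l₁ (π₁ ((s x)⁻¹) v) = l₂ (π₂ ((s x)⁻¹) w))
    (T : B₁ → B₂)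
    (hT : ∀ b : B₁,
      IsWeakIntegral μ (fun x => l₁ (π₁ ((s x)⁻¹) b) • π₂ (s x) b₂) (T b)) :
    ∀ (g : G) (b : B₁), T (π₁ g b) = π₂ g (T b) := by
  -- χ takes the same value as its conjugate
  have hχconj : ∀ h : H, conj (χ h) = χ h := by
    intro h
    have h1 : l₁ (π₁ (h : G) b₁) = conj (χ h) * l₁ b₁ := by
      have := congrArg (fun f : B₁ →L[ℂ] ℂ => f b₁) (hl₁ h)
      simpa using this
    have h2 : l₁ (π₁ (h : G) b₁) = χ h * l₁ b₁ := by
      rw [hvac₁ h]; simp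
    exact mul_right_cancel₀ hpair₁ (h1.symm.trans h2)
  have hb₁ne : b₁ ≠ 0 := by
    intro h0; rw [h0, norm_zero] at hnb₁; exact zero_ne_one hnb₁
  have hχone : χ 1 = 1 := by
    have h1 : π₁ ((1 : H) : G) b₁ = χ 1 • b₁ := hvac₁ 1
    simp only [Subgroup.coe_one, map_one, ContinuousLinearMap.one_apply] at h1
    have : (χ 1 - 1) • b₁ = 0 := by
      rw [sub_smul, one_smul, ← h1, sub_self]
    rcases smul_eq_zero.1 this with h | h
    · exact sub_eq_zero.mp h
    · exact absurd h hb₁ne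
  have hχmulinv : ∀ h : H, χ h * χ h⁻¹ = 1 := by
    intro h
    rw [← hχ h h⁻¹, mul_inv_cancel, hχone]
  intro g b
  rw [NormedSpace.eq_iff_forall_dual_eq ℂ]
  intro l
  have hA := hT (π₁ g b) l
  have hB := hT b (l.comp (π₂ g))
  -- the integrand on the left side
  set F : X → ℂ := fun y => l₁ (π₁ ((s y)⁻¹ * g) b) * l (π₂ (s y) b₂) with hF
  have hAint : (fun x => l (l₁ (π₁ ((s x)⁻¹) (π₁ g b)) • π₂ (s x) b₂)) = F := by
    funext y
    simp only [hF, _root_.map_smul, smul_eq_mul, map_mul, ContinuousLinearMap.mul_apply]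
  have hFint : Integrable F μ := hAint ▸ hA.1
  have hLHS : l (T (π₁ g b)) = ∫ y, F y ∂μ := by
    rw [hA.2, hAint]
  -- the integrand on the right side
  have hRHS : l (π₂ g (T b)) =
      ∫ x, l₁ (π₁ ((s x)⁻¹) b) * l (π₂ (g * s x) b₂) ∂μ := by
    have := hB.2
    simp only [ContinuousLinearMap.comp_apply, _root_.map_smul, smul_eq_mul, map_mul,
      ContinuousLinearMap.mul_apply] at this
    rw [this]
    congr 1
    funext x
    rw [map_mul, ContinuousLinearMap.mul_apply]
  -- change of variables
  have hmp := hinv g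
  have hmap : ∫ y, F y ∂μ = ∫ x, F (xPart (g * s x)) ∂μ := by
    have h1 : ∫ y, F y ∂(Measure.map (fun x => xPart (g * s x)) μ)
        = ∫ x, F (xPart (g * s x)) ∂μ := by
      refine integral_map hmp.measurable.aemeasurable ?_
      rw [hmp.map_eq]
      exact hFint.aestronglyMeasurable
    rw [hmp.map_eq] at h1
    exact h1
  -- pointwise identity
  have hpt : ∀ x, F (xPart (g * s x)) = l₁ (π₁ ((s x)⁻¹) b) * l (π₂ (g * s x) b₂) := by
    intro x
    set h := hPart (g * s x) with hh
    have hd : s (xPart (g * s x)) * (h : G) = g * s x := hdecomp (g * s x)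
    have hs' : s (xPart (g * s x)) = g * s x * (h : G)⁻¹ := eq_mul_inv_of_mul_eq hd
    have e1 : (s (xPart (g * s x)))⁻¹ * g = (h : G) * (s x)⁻¹ := by
      rw [hs']; group
    have t1 : l₁ (π₁ ((s (xPart (g * s x)))⁻¹ * g) b)
        = χ h * l₁ (π₁ ((s x)⁻¹) b) := by
      rw [e1, map_mul, ContinuousLinearMap.mul_apply]
      have := congrArg (fun f : B₁ →L[ℂ] ℂ => f (π₁ ((s x)⁻¹) b)) (hl₁ h)
      simp only [ContinuousLinearMap.comp_apply, ContinuousLinearMap.smul_apply,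
        smul_eq_mul] at this
      rw [this, hχconj]
    have t2 : l (π₂ (s (xPart (g * s x))) b₂) = χ h⁻¹ * l (π₂ (g * s x) b₂) := by
      rw [hs', map_mul, ContinuousLinearMap.mul_apply]
      have hinvcoe : ((h : G))⁻¹ = ((h⁻¹ : H) : G) := by simp
      rw [hinvcoe, hvac₂ h⁻¹]
      simp only [_root_.map_smul, smul_eq_mul]
    show l₁ (π₁ ((s (xPart (g * s x)))⁻¹ * g) b) * l (π₂ (s (xPart (g * s x))) b₂) = _
    rw [t1, t2]
    linear_combination (l₁ (π₁ ((s x)⁻¹) b) * l (π₂ (g * s x) b₂)) * hχmulinv h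
  rw [hLHS, hRHS, hmap]
  exact integral_congr_ae (Filter.Eventually.of_forall hpt)
end

section
/- Assume (G,H,π,B,b₀,l₀) is an admissible set and π is topologically irreducible (so that M∘W = I on B). Then any bounded operator A on B can be reconstructed from its covariant presymbol: for every v ∈ B, Av = ∫_X (∫_X σ_A(x₁,x₂) · v̂(x₂) dμ(x₂)) · π(s(x₁)) b₀ dμ(x₁) as a weakly convergent iterated integral, where v̂ = Wv. -/
open MeasureTheory ComplexConjugate

theorem stmt13
    {G : Type} [Group G]
    {B : Type} [NormedAddCommGroup B] [NormedSpace ℂ B] [CompleteSpace B]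
    {X : Type} [MeasurableSpace X] (μ : Measure X)
    (H : Subgroup G) (hHnormal : H.Normal)
    (s : X → G) (xPart : G → X) (hPart : G → H)
    (hdecomp : ∀ g : G, s (xPart g) * ((hPart g : G)) = g)
    (hsec : ∀ x : X, xPart (s x) = x)
    (π : G →* (B →L[ℂ] B))
    (hπiso : ∀ (g : G) (b : B), ‖π g b‖ = ‖b‖)
    (χ : H → ℂ) (hχ : ∀ h₁ h₂ : H, χ (h₁ * h₂) = χ h₁ * χ h₂)
    (b₀ : B) (l₀ : B →L[ℂ] ℂ)
    (hvac : ∀ h : H, π (h : G) b₀ = χ h • b₀)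
    (hl : ∀ h : H, l₀.comp (π (h : G)) = (conj (χ h)) • l₀)
    (hnb : ‖b₀‖ = 1) (hnl : ‖l₀‖ = 1) (hpair : l₀ b₀ ≠ 0)
    (hadmi : Integrable (fun x => l₀ (π ((s x)⁻¹) b₀) * l₀ (π (s x) b₀)) μ)
    (hadm : ∫ x, l₀ (π ((s x)⁻¹) b₀) * l₀ (π (s x) b₀) ∂μ = l₀ b₀)
    (hirr : ∀ V : Submodule ℂ B, IsClosed (V : Set B) → (∀ g : G, ∀ v ∈ V, π g v ∈ V) → V = ⊥ ∨ V = ⊤)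
    (hMW : ∀ v : B, IsWeakIntegral μ (fun x => l₀ (π ((s x)⁻¹) v) • π (s x) b₀) v)
    :
    ∀ (A : B →L[ℂ] B) (v : B),
      IsWeakIntegral μ
        (fun x₁ => (∫ x₂, l₀ (π ((s x₁)⁻¹) (A (π (s x₂) b₀))) *
          l₀ (π ((s x₂)⁻¹) v) ∂μ) • π (s x₁) b₀)
        (A v) := by
  intro A v
  have key : ∀ x₁ : X, (∫ x₂, l₀ (π ((s x₁)⁻¹) (A (π (s x₂) b₀))) *
      l₀ (π ((s x₂)⁻¹) v) ∂μ) = l₀ (π ((s x₁)⁻¹) (A v)) := by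
    intro x₁
    have h := (hMW v (l₀.comp ((π ((s x₁)⁻¹)).comp A))).2
    simp only [ContinuousLinearMap.comp_apply] at h
    rw [h]
    refine integral_congr_ae (Filter.Eventually.of_forall fun x₂ => ?_)
    simp [mul_comm]
  have hf : (fun x₁ => (∫ x₂, l₀ (π ((s x₁)⁻¹) (A (π (s x₂) b₀))) *
      l₀ (π ((s x₂)⁻¹) v) ∂μ) • π (s x₁) b₀)
      = fun x₁ => l₀ (π ((s x₁)⁻¹) (A v)) • π (s x₁) b₀ := by
    funext x₁; rw [key]
  rw [hf]
  exact hMW (A v)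
end

section
/- Let A be a bounded linear operator on 𝓗 admitting a contravariant symbol Ă. Then D(A) ⊆ D̂(A) ⊆ D̆(A), where D(A) = {⟨A b_x, b_x⟩ : x ∈ X} is the set of values of the covariant symbol of A, D̂(A) = {⟨A b, b⟩ : b ∈ 𝓗, ‖b‖ = 1} is the set of values of the quadratic form of A on unit vectors, and D̆(A) is the closed convex hull of the set of values taken by Ă. -/
open MeasureTheory ComplexConjugate

theorem stmt15
    {𝓗 : Type} [NormedAddCommGroup 𝓗] [InnerProductSpace ℂ 𝓗]
    {X : Type} [MeasurableSpace X] (μ : Measure X)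
    (b : X → 𝓗) (hb : ∀ x : X, ‖b x‖ = 1)
    (hres : ∀ u w : 𝓗,
      Integrable (fun x => (inner ℂ (b x) u : ℂ) * (inner ℂ w (b x) : ℂ)) μ ∧
      ∫ x, (inner ℂ (b x) u : ℂ) * (inner ℂ w (b x) : ℂ) ∂μ = (inner ℂ w u : ℂ))
    (A : 𝓗 →L[ℂ] 𝓗) (Acontra : X → ℂ)
    (hAcontra : ∀ u w : 𝓗,
      Integrable (fun x => Acontra x * (inner ℂ (b x) u : ℂ) * (inner ℂ w (b x) : ℂ)) μ ∧
      ∫ x, Acontra x * (inner ℂ (b x) u : ℂ) * (inner ℂ w (b x) : ℂ) ∂μ = (inner ℂ w (A u) : ℂ)) :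
    {c : ℂ | ∃ x : X, c = (inner ℂ (b x) (A (b x)) : ℂ)} ⊆
      {c : ℂ | ∃ u : 𝓗, ‖u‖ = 1 ∧ c = (inner ℂ u (A u) : ℂ)} ∧
    {c : ℂ | ∃ u : 𝓗, ‖u‖ = 1 ∧ c = (inner ℂ u (A u) : ℂ)} ⊆
      closure (convexHull ℝ (Set.range Acontra)) := by
  constructor
  · rintro c ⟨x, rfl⟩
    exact ⟨b x, hb x, rfl⟩
  · rintro c ⟨u, hu, rfl⟩
    -- weight function
    set f : X → ℂ := fun x => (inner ℂ (b x) u : ℂ) * (inner ℂ u (b x) : ℂ) with hf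
    have hfval : ∀ x, f x = ((Complex.normSq (inner ℂ (b x) u : ℂ) : ℝ) : ℂ) := by
      intro x
      simp only [hf, ← inner_conj_symm u (b x), ← Complex.mul_conj]
    set p : X → ℝ := fun x => Complex.normSq (inner ℂ (b x) u : ℂ) with hp
    have hp0 : ∀ x, 0 ≤ p x := fun x => Complex.normSq_nonneg _
    have hfi : Integrable f μ := (hres u u).1
    have hfint : ∫ x, f x ∂μ = 1 := by
      rw [(hres u u).2, inner_self_eq_norm_sq_to_K, hu]
      norm_num
    have hpi : Integrable p μ := by
      have := hfi.re
      refine this.congr (Filter.Eventually.of_forall fun x => ?_)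
      show Complex.re (f x) = p x
      rw [hfval x]; simp; rfl
    have hpmeas : AEMeasurable p μ := hpi.aemeasurable
    have hpint : ∫ x, p x ∂μ = 1 := by
      have h1 : ∫ x, Complex.re (f x) ∂μ = Complex.re (∫ x, f x ∂μ) := integral_re hfi
      rw [hfint] at h1
      simp only [Complex.one_re] at h1
      rw [← h1]
      refine integral_congr_ae (Filter.Eventually.of_forall fun x => ?_)
      show p x = Complex.re (f x)
      rw [hfval x]; simp; rfl
    -- density as ℝ≥0
    set g : X → NNReal := fun x => (p x).toNNReal with hg
    have hgmeas : AEMeasurable g μ := hpmeas.real_toNNReal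
    set ν : Measure X := μ.withDensity (fun x => (g x : ENNReal)) with hν
    have hprob : IsProbabilityMeasure ν := by
      constructor
      rw [hν, withDensity_apply _ MeasurableSet.univ, Measure.restrict_univ]
      have : ∀ᵐ x ∂μ, ((g x : ENNReal)) = ENNReal.ofReal (p x) :=
        Filter.Eventually.of_forall fun x => by
          simp [hg, ENNReal.ofReal]
      rw [lintegral_congr_ae this, ← ofReal_integral_eq_lintegral_ofReal hpi
        (Filter.Eventually.of_forall hp0), hpint]
      norm_num
    -- restate the Acontra integral
    have hAfi : Integrable (fun x => g x • Acontra x) μ := by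
      refine ((hAcontra u u).1).congr (Filter.Eventually.of_forall fun x => ?_)
      show Acontra x * (inner ℂ (b x) u : ℂ) * (inner ℂ u (b x) : ℂ) = g x • Acontra x
      rw [mul_assoc]
      show Acontra x * f x = g x • Acontra x
      rw [hfval x, NNReal.smul_def, Complex.real_smul, mul_comm]
      congr 1
      exact_mod_cast congrArg Complex.ofReal (Real.coe_toNNReal _ (hp0 x)).symm
    have hAi : Integrable Acontra ν := by
      rw [hν, integrable_withDensity_iff_integrable_smul₀ hgmeas]
      exact hAfi
    have hAint : ∫ x, Acontra x ∂ν = (inner ℂ u (A u) : ℂ) := by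
      rw [hν, integral_withDensity_eq_integral_smul₀ hgmeas]
      rw [← (hAcontra u u).2]
      refine integral_congr_ae (Filter.Eventually.of_forall fun x => ?_)
      show g x • Acontra x = Acontra x * (inner ℂ (b x) u : ℂ) * (inner ℂ u (b x) : ℂ)
      rw [mul_assoc]
      show g x • Acontra x = Acontra x * f x
      rw [hfval x, NNReal.smul_def, Complex.real_smul, mul_comm]
      congr 1
      exact_mod_cast congrArg Complex.ofReal (Real.coe_toNNReal _ (hp0 x))
    rw [← hAint]
    refine Convex.integral_mem ((convex_convexHull ℝ _).closure) isClosed_closure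
      (Filter.Eventually.of_forall fun x =>
        subset_closure (subset_convexHull ℝ _ (Set.mem_range_self x))) hAi
end
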